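/- arXiv:0807.2040 — 2 statements merged into one kernel-verified Lean document; each statement's English description precedes it below -/
import Mathlib

section
/- Let κ be an integrable hyperkernel on a probability space (S, μ) with S_κ(1)(x) < ∞ for every x ∈ S, where 1 is the constant function one. Define ρ_0 = 1 and ρ_{t+1} = Φ_κ(ρ_t). Then the sequence (ρ_t) is pointwise decreasing; its pointwise limit ρ_κ is a measurable function S → [0,1] satisfying ρ_κ = Φ_κ(ρ_κ); and every measurable f : S → [0,1] with f = Φ_κ(f) satisfies f(x) ≤ ρ_κ(x) < 1 for every x ∈ S. -/
open MeasureTheory ENNReal Filter Topology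

/-- The nonlinear operator `S_κ` associated to a hyperkernel `κ = (κ_r)_{r ≥ 2}`;
here `κ m` plays the role of `κ_{m+2}`. -/
noncomputable def Sop {S : Type*} [MeasurableSpace S] (μ : Measure S)
    (κ : (m : ℕ) → (Fin (m + 2) → S) → ℝ≥0∞) (f : S → ℝ) (x : S) : ℝ≥0∞ :=
  ∑' m : ℕ, ((m : ℝ≥0∞) + 2) *
    ∫⁻ y : Fin (m + 1) → S,
      κ m (Fin.cons x y) * ENNReal.ofReal (1 - ∏ i, (1 - f (y i)))
      ∂(Measure.pi fun _ => μ)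

/-- The edge kernel `κ_e` of a hyperkernel. -/
noncomputable def edgeKernel {S : Type*} [MeasurableSpace S] (μ : Measure S)
    (κ : (m : ℕ) → (Fin (m + 2) → S) → ℝ≥0∞) (x y : S) : ℝ≥0∞ :=
  ∑' m : ℕ, ((m : ℝ≥0∞) + 2) * ((m : ℝ≥0∞) + 1) *
    ∫⁻ z : Fin m → S, κ m (Fin.cons x (Fin.cons y z)) ∂(Measure.pi fun _ => μ)

/-- The linear operator `T_κ`. -/
noncomputable def Tlin {S : Type*} [MeasurableSpace S] (μ : Measure S)
    (κ : (m : ℕ) → (Fin (m + 2) → S) → ℝ≥0∞) (f : S → ℝ) (x : S) : ℝ≥0∞ :=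
  ∫⁻ y, edgeKernel μ κ x y * ENNReal.ofReal (f y) ∂μ

/-- All kernels of the family are measurable. -/
def HyperkernelMeasurable {S : Type*} [MeasurableSpace S]
    (κ : (m : ℕ) → (Fin (m + 2) → S) → ℝ≥0∞) : Prop :=
  ∀ m, Measurable (κ m)

/-- Each kernel is invariant under all permutations of its arguments. -/
def HyperkernelSymm {S : Type*} [MeasurableSpace S]
    (κ : (m : ℕ) → (Fin (m + 2) → S) → ℝ≥0∞) : Prop :=
  ∀ m (σ : Equiv.Perm (Fin (m + 2))) (v : Fin (m + 2) → S), κ m (v ∘ σ) = κ m v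

/-- Integrability of the hyperkernel: `∑_{r≥2} r ∫_{S^r} κ_r < ∞`. -/
def HyperkernelIntegrable {S : Type*} [MeasurableSpace S] (μ : Measure S)
    (κ : (m : ℕ) → (Fin (m + 2) → S) → ℝ≥0∞) : Prop :=
  ∑' m : ℕ, ((m : ℝ≥0∞) + 2) *
    ∫⁻ v : Fin (m + 2) → S, κ m v ∂(Measure.pi fun _ => μ) ≠ ⊤

/-- `expNeg a = e^{-a}` for `a ∈ [0,∞]`, with `e^{-∞} = 0`. -/
noncomputable def expNeg (a : ℝ≥0∞) : ℝ := if a = ⊤ then 0 else Real.exp (-a.toReal)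

/-- The operator `Φ_κ(f) = 1 - e^{-S_κ(f)}`. -/
noncomputable def Phi {S : Type*} [MeasurableSpace S] (μ : Measure S)
    (κ : (m : ℕ) → (Fin (m + 2) → S) → ℝ≥0∞) (f : S → ℝ) (x : S) : ℝ :=
  1 - expNeg (Sop μ κ f x)

/-- Irreducibility of the hyperkernel. -/
def HyperkernelIrreducible {S : Type*} [MeasurableSpace S] (μ : Measure S)
    (κ : (m : ℕ) → (Fin (m + 2) → S) → ℝ≥0∞) : Prop :=
  ∀ A : Set S, MeasurableSet A →
    (∀ᵐ p ∂(μ.prod μ), p ∈ A ×ˢ Aᶜ → edgeKernel μ κ p.1 p.2 = 0) →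
    μ A = 0 ∨ μ Aᶜ = 0

/-- The decreasing iterates `ρ_0 = 1`, `ρ_{t+1} = Φ_κ(ρ_t)`. -/
noncomputable def rhoSeq {S : Type*} [MeasurableSpace S] (μ : Measure S)
    (κ : (m : ℕ) → (Fin (m + 2) → S) → ℝ≥0∞) : ℕ → S → ℝ
  | 0 => fun _ => 1
  | t + 1 => Phi μ κ (rhoSeq μ κ t)

/-- The pointwise limit `ρ_κ` of the decreasing iterates `Φ_κ^t(1)`. -/
noncomputable def rhoFun {S : Type*} [MeasurableSpace S] (μ : Measure S)
    (κ : (m : ℕ) → (Fin (m + 2) → S) → ℝ≥0∞) : S → ℝ :=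
  fun x => ⨅ t : ℕ, rhoSeq μ κ t x

/-- The condition `‖T_κ‖ > 1` on the `L²(μ)` operator norm of `T_κ`. -/
def TopNormGtOne {S : Type*} [MeasurableSpace S] (μ : Measure S)
    (κ : (m : ℕ) → (Fin (m + 2) → S) → ℝ≥0∞) : Prop :=
  ∃ h : S → ℝ, Measurable h ∧ (∀ x, 0 ≤ h x) ∧
    (∫⁻ x, ENNReal.ofReal (h x) ^ 2 ∂μ) ≤ 1 ∧ 1 < ∫⁻ x, (Tlin μ κ h x) ^ 2 ∂μ


section Aux

variable {S : Type*} [MeasurableSpace S]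

lemma expNeg_nonneg (a : ℝ≥0∞) : 0 ≤ expNeg a := by
  unfold expNeg; split
  · exact le_refl 0
  · exact (Real.exp_pos _).le

lemma expNeg_le_one (a : ℝ≥0∞) : expNeg a ≤ 1 := by
  unfold expNeg; split
  · norm_num
  · exact Real.exp_le_one_iff.mpr (neg_nonpos.mpr ENNReal.toReal_nonneg)

lemma expNeg_pos {a : ℝ≥0∞} (ha : a ≠ ⊤) : 0 < expNeg a := by
  unfold expNeg; rw [if_neg ha]; exact Real.exp_pos _

lemma expNeg_anti {a b : ℝ≥0∞} (hab : a ≤ b) : expNeg b ≤ expNeg a := by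
  unfold expNeg
  by_cases hb : b = ⊤
  · rw [if_pos hb]; split
    · exact le_refl 0
    · exact (Real.exp_pos _).le
  · have ha : a ≠ ⊤ := fun h => hb (top_le_iff.mp (h ▸ hab))
    rw [if_neg hb, if_neg ha]
    exact Real.exp_le_exp.mpr (neg_le_neg (ENNReal.toReal_mono hb hab))

lemma measurable_expNeg : Measurable expNeg := by
  unfold expNeg
  exact Measurable.ite (measurableSet_singleton ⊤) measurable_const
    (Real.measurable_exp.comp ENNReal.measurable_toReal.neg)

lemma tendsto_expNeg {a : ℕ → ℝ≥0∞} {L : ℝ≥0∞} (hL : L ≠ ⊤) (ha : ∀ t, a t ≠ ⊤)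
    (h : Tendsto a atTop (nhds L)) :
    Tendsto (fun t => expNeg (a t)) atTop (nhds (expNeg L)) := by
  have h1 : Tendsto (fun t => (a t).toReal) atTop (nhds L.toReal) :=
    (ENNReal.tendsto_toReal hL).comp h
  have h2 : Tendsto (fun t => Real.exp (-(a t).toReal)) atTop (nhds (Real.exp (-L.toReal))) :=
    (Real.continuous_exp.tendsto _).comp h1.neg
  have e1 : ∀ t, expNeg (a t) = Real.exp (-(a t).toReal) := fun t => if_neg (ha t)
  have e2 : expNeg L = Real.exp (-L.toReal) := if_neg hL
  simp only [e1, e2]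
  exact h2

variable (μ : Measure S) [IsProbabilityMeasure μ]
  (κ : (m : ℕ) → (Fin (m + 2) → S) → ℝ≥0∞)

lemma prod_term_le {f g : S → ℝ} (hg1 : ∀ x, g x ≤ 1) (hfg : ∀ x, f x ≤ g x)
    {n : ℕ} (y : Fin n → S) :
    (1 - ∏ i, (1 - f (y i))) ≤ (1 - ∏ i, (1 - g (y i))) := by
  have h : ∏ i, (1 - g (y i)) ≤ ∏ i, (1 - f (y i)) := by
    apply Finset.prod_le_prod
    · intro i _; linarith [hg1 (y i)]
    · intro i _; linarith [hfg (y i)]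
  linarith

lemma Sop_mono {f g : S → ℝ} (hg1 : ∀ x, g x ≤ 1) (hfg : ∀ x, f x ≤ g x) (x : S) :
    Sop μ κ f x ≤ Sop μ κ g x := by
  refine ENNReal.tsum_le_tsum fun m => ?_
  refine mul_le_mul_right (lintegral_mono fun y => mul_le_mul_right ?_ _) _
  exact ENNReal.ofReal_le_ofReal (prod_term_le hg1 hfg y)

lemma Sop_one_eq (x : S) :
    Sop μ κ (fun _ => 1) x = ∑' m : ℕ, ((m : ℝ≥0∞) + 2) *
      ∫⁻ y : Fin (m + 1) → S, κ m (Fin.cons x y) ∂(Measure.pi fun _ => μ) := by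
  unfold Sop
  refine tsum_congr fun m => ?_
  congr 1
  refine lintegral_congr fun y => ?_
  simp

lemma Sop_le_Sop_one {f : S → ℝ} (hf : ∀ x, f x ≤ 1) (x : S) :
    Sop μ κ f x ≤ Sop μ κ (fun _ => 1) x :=
  Sop_mono μ κ (fun _ => le_refl 1) hf x

lemma measurable_consMap (n : ℕ) :
    Measurable fun p : S × (Fin n → S) => Fin.cons (α := fun _ => S) p.1 p.2 := by
  apply measurable_pi_lambda
  intro i
  refine Fin.cases ?_ ?_ i
  · exact measurable_fst
  · intro j
    exact (measurable_pi_apply j).comp measurable_snd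

lemma measurable_cons_left (n : ℕ) (x : S) :
    Measurable fun y : Fin n → S => Fin.cons (α := fun _ => S) x y := by
  apply measurable_pi_lambda
  intro i
  refine Fin.cases ?_ ?_ i
  · exact measurable_const
  · intro j
    exact measurable_pi_apply j

lemma measurable_prodTerm {f : S → ℝ} (hf : Measurable f) (n : ℕ) :
    Measurable fun y : Fin n → S => ENNReal.ofReal (1 - ∏ i, (1 - f (y i))) := by
  refine ENNReal.measurable_ofReal.comp (Measurable.const_sub ?_ 1)
  exact Finset.measurable_prod _ fun i _ =>
    Measurable.const_sub (hf.comp (measurable_pi_apply i)) 1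

lemma measurable_Sop (hmeas : HyperkernelMeasurable κ) {f : S → ℝ} (hf : Measurable f) :
    Measurable fun x => Sop μ κ f x := by
  unfold Sop
  refine Measurable.ennreal_tsum fun m => Measurable.const_mul ?_ _
  have h1 : Measurable fun p : S × (Fin (m + 1) → S) => κ m (Fin.cons p.1 p.2) :=
    (hmeas m).comp (measurable_consMap (m + 1))
  have h2 : Measurable fun p : S × (Fin (m + 1) → S) =>
      ENNReal.ofReal (1 - ∏ i, (1 - f (p.2 i))) :=
    (measurable_prodTerm hf (m + 1)).comp measurable_snd
  exact (h1.mul h2).lintegral_prod_right'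

lemma Phi_nonneg (f : S → ℝ) (x : S) : 0 ≤ Phi μ κ f x :=
  sub_nonneg.mpr (expNeg_le_one _)

lemma Phi_le_one (f : S → ℝ) (x : S) : Phi μ κ f x ≤ 1 := by
  have h := expNeg_nonneg (Sop μ κ f x); unfold Phi; linarith

lemma Phi_lt_one {f : S → ℝ} {x : S} (h : Sop μ κ f x ≠ ⊤) : Phi μ κ f x < 1 := by
  have h2 := expNeg_pos h; unfold Phi; linarith

lemma Phi_mono {f g : S → ℝ} (hg1 : ∀ x, g x ≤ 1) (hfg : ∀ x, f x ≤ g x) (x : S) :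
    Phi μ κ f x ≤ Phi μ κ g x :=
  sub_le_sub_left (expNeg_anti (Sop_mono μ κ hg1 hfg x)) 1

lemma measurable_Phi (hmeas : HyperkernelMeasurable κ) {f : S → ℝ} (hf : Measurable f) :
    Measurable (Phi μ κ f) :=
  Measurable.const_sub (measurable_expNeg.comp (measurable_Sop μ κ hmeas hf)) 1

lemma rhoSeq_mem (t : ℕ) (x : S) : 0 ≤ rhoSeq μ κ t x ∧ rhoSeq μ κ t x ≤ 1 := by
  cases t with
  | zero => exact ⟨zero_le_one, le_refl 1⟩
  | succ t => exact ⟨Phi_nonneg μ κ _ x, Phi_le_one μ κ _ x⟩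

lemma rhoSeq_succ_le (t : ℕ) (x : S) : rhoSeq μ κ (t + 1) x ≤ rhoSeq μ κ t x := by
  induction t generalizing x with
  | zero => exact Phi_le_one μ κ _ x
  | succ t ih =>
      exact Phi_mono μ κ (fun z => (rhoSeq_mem μ κ t z).2) (fun z => ih z) x

lemma rhoSeq_anti (x : S) : Antitone fun t => rhoSeq μ κ t x :=
  antitone_nat_of_succ_le fun t => rhoSeq_succ_le μ κ t x

lemma measurable_rhoSeq (hmeas : HyperkernelMeasurable κ) (t : ℕ) :
    Measurable (rhoSeq μ κ t) := by
  induction t with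
  | zero => exact measurable_const
  | succ t ih => exact measurable_Phi μ κ hmeas ih

lemma rhoSeq_bddBelow (x : S) : BddBelow (Set.range fun t => rhoSeq μ κ t x) := by
  refine ⟨0, ?_⟩
  rintro r ⟨t, rfl⟩
  exact (rhoSeq_mem μ κ t x).1

lemma rhoFun_mem (x : S) : 0 ≤ rhoFun μ κ x ∧ rhoFun μ κ x ≤ 1 := by
  constructor
  · exact le_ciInf fun t => (rhoSeq_mem μ κ t x).1
  · exact le_trans (ciInf_le (rhoSeq_bddBelow μ κ x) 0) (rhoSeq_mem μ κ 0 x).2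

lemma rhoSeq_tendsto (x : S) :
    Tendsto (fun t => rhoSeq μ κ t x) atTop (nhds (rhoFun μ κ x)) :=
  tendsto_atTop_ciInf (rhoSeq_anti μ κ x) (rhoSeq_bddBelow μ κ x)

lemma measurable_rhoFun (hmeas : HyperkernelMeasurable κ) :
    Measurable (rhoFun μ κ) :=
  measurable_of_tendsto_metrizable (measurable_rhoSeq μ κ hmeas)
    (tendsto_pi_nhds.2 fun x => rhoSeq_tendsto μ κ x)

lemma kernelSlice_ne_top (hfin : ∀ x, Sop μ κ (fun _ => 1) x < ⊤) (x : S) (m : ℕ) :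
    (∫⁻ y : Fin (m + 1) → S, κ m (Fin.cons x y) ∂(Measure.pi fun _ => μ)) ≠ ⊤ := by
  intro h
  have h1 : ((m : ℝ≥0∞) + 2) *
      (∫⁻ y : Fin (m + 1) → S, κ m (Fin.cons x y) ∂(Measure.pi fun _ => μ))
      ≤ Sop μ κ (fun _ => 1) x := by
    rw [Sop_one_eq]
    exact ENNReal.le_tsum m
  have h0 : ((m : ℝ≥0∞) + 2) ≠ 0 := by simp
  rw [h, ENNReal.mul_top h0] at h1
  exact absurd (top_le_iff.mp h1) (hfin x).ne

lemma Sop_tendsto (hmeas : HyperkernelMeasurable κ)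
    (hfin : ∀ x, Sop μ κ (fun _ => 1) x < ⊤)
    {F : ℕ → S → ℝ} (hFmeas : ∀ t, Measurable (F t)) (hF1 : ∀ t z, F t z ≤ 1)
    {f : S → ℝ} (hlim : ∀ z, Tendsto (fun t => F t z) atTop (nhds (f z))) (x : S) :
    Tendsto (fun t => Sop μ κ (F t) x) atTop (nhds (Sop μ κ f x)) := by
  have inner : ∀ m : ℕ, Tendsto (fun t => ∫⁻ y : Fin (m + 1) → S,
      κ m (Fin.cons x y) * ENNReal.ofReal (1 - ∏ i, (1 - F t (y i)))
        ∂(Measure.pi fun _ => μ))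
      atTop (nhds (∫⁻ y : Fin (m + 1) → S,
      κ m (Fin.cons x y) * ENNReal.ofReal (1 - ∏ i, (1 - f (y i)))
        ∂(Measure.pi fun _ => μ))) := by
    intro m
    have hκm : Measurable fun y : Fin (m + 1) → S => κ m (Fin.cons x y) :=
      (hmeas m).comp (measurable_cons_left (m + 1) x)
    apply tendsto_lintegral_of_dominated_convergence
      (fun y => κ m (Fin.cons x y))
    · intro t
      exact hκm.mul (measurable_prodTerm (hFmeas t) (m + 1))
    · intro t
      refine Eventually.of_forall fun y => ?_
      have hp : (0 : ℝ) ≤ ∏ i, (1 - F t (y i)) :=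
        Finset.prod_nonneg fun i _ => sub_nonneg.mpr (hF1 t (y i))
      calc κ m (Fin.cons x y) * ENNReal.ofReal (1 - ∏ i, (1 - F t (y i)))
          ≤ κ m (Fin.cons x y) * 1 :=
            mul_le_mul_right (ENNReal.ofReal_le_one.mpr (by linarith)) _
        _ = κ m (Fin.cons x y) := mul_one _
    · exact kernelSlice_ne_top μ κ hfin x m
    · have hae : ∀ᵐ y ∂(Measure.pi fun _ : Fin (m + 1) => μ),
          κ m (Fin.cons x y) < ⊤ :=
        ae_lt_top hκm (kernelSlice_ne_top μ κ hfin x m)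
      filter_upwards [hae] with y hy
      have h1 : Tendsto (fun t => (1 : ℝ) - ∏ i, (1 - F t (y i))) atTop
          (nhds (1 - ∏ i, (1 - f (y i)))) :=
        Tendsto.const_sub _ (tendsto_finset_prod _ fun i _ =>
          Tendsto.const_sub _ (hlim (y i)))
      exact ENNReal.Tendsto.const_mul
        ((ENNReal.continuous_ofReal.tendsto _).comp h1) (Or.inr hy.ne)
  have houter := tendsto_lintegral_of_dominated_convergence
    (μ := (Measure.count : Measure ℕ))
    (F := fun t m => ((m : ℝ≥0∞) + 2) * ∫⁻ y : Fin (m + 1) → S,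
      κ m (Fin.cons x y) * ENNReal.ofReal (1 - ∏ i, (1 - F t (y i)))
        ∂(Measure.pi fun _ => μ))
    (f := fun m => ((m : ℝ≥0∞) + 2) * ∫⁻ y : Fin (m + 1) → S,
      κ m (Fin.cons x y) * ENNReal.ofReal (1 - ∏ i, (1 - f (y i)))
        ∂(Measure.pi fun _ => μ))
    (fun m => ((m : ℝ≥0∞) + 2) * ∫⁻ y : Fin (m + 1) → S,
      κ m (Fin.cons x y) ∂(Measure.pi fun _ => μ))
    (fun t => measurable_of_countable _)
    (fun t => Eventually.of_forall fun m => by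
      refine mul_le_mul_right (lintegral_mono fun y => ?_) _
      have hp : (0 : ℝ) ≤ ∏ i, (1 - F t (y i)) :=
        Finset.prod_nonneg fun i _ => sub_nonneg.mpr (hF1 t (y i))
      calc κ m (Fin.cons x y) * ENNReal.ofReal (1 - ∏ i, (1 - F t (y i)))
          ≤ κ m (Fin.cons x y) * 1 :=
            mul_le_mul_right (ENNReal.ofReal_le_one.mpr (by linarith)) _
        _ = κ m (Fin.cons x y) := mul_one _)
    (by
      rw [lintegral_count, ← Sop_one_eq μ κ x]
      exact (hfin x).ne)
    (Eventually.of_forall fun m => ENNReal.Tendsto.const_mul (inner m)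
      (Or.inr (ENNReal.add_ne_top.mpr ⟨ENNReal.natCast_ne_top m, ENNReal.ofNat_ne_top⟩)))
  simp only [lintegral_count] at houter
  exact houter

lemma Sop_rho_ne_top (hfin : ∀ x, Sop μ κ (fun _ => 1) x < ⊤)
    {f : S → ℝ} (hf : ∀ z, f z ≤ 1) (x : S) : Sop μ κ f x ≠ ⊤ :=
  ((Sop_le_Sop_one μ κ hf x).trans_lt (hfin x)).ne

lemma rhoFun_fixed (hmeas : HyperkernelMeasurable κ)
    (hfin : ∀ x, Sop μ κ (fun _ => 1) x < ⊤) (x : S) :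
    rhoFun μ κ x = Phi μ κ (rhoFun μ κ) x := by
  have hS : Tendsto (fun t => Sop μ κ (rhoSeq μ κ t) x) atTop
      (nhds (Sop μ κ (rhoFun μ κ) x)) :=
    Sop_tendsto μ κ hmeas hfin (measurable_rhoSeq μ κ hmeas)
      (fun t z => (rhoSeq_mem μ κ t z).2) (fun z => rhoSeq_tendsto μ κ z) x
  have hne : ∀ t, Sop μ κ (rhoSeq μ κ t) x ≠ ⊤ :=
    fun t => Sop_rho_ne_top μ κ hfin (fun z => (rhoSeq_mem μ κ t z).2) x
  have hLne : Sop μ κ (rhoFun μ κ) x ≠ ⊤ :=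
    Sop_rho_ne_top μ κ hfin (fun z => (rhoFun_mem μ κ z).2) x
  have hPhi : Tendsto (fun t => Phi μ κ (rhoSeq μ κ t) x) atTop
      (nhds (Phi μ κ (rhoFun μ κ) x)) :=
    Tendsto.const_sub 1 (tendsto_expNeg hLne hne hS)
  have h2 : Tendsto (fun t => rhoSeq μ κ (t + 1) x) atTop (nhds (rhoFun μ κ x)) :=
    (rhoSeq_tendsto μ κ x).comp (tendsto_add_atTop_nat 1)
  exact tendsto_nhds_unique h2 hPhi

lemma fix_le_rhoSeq {f : S → ℝ} (hf1 : ∀ z, f z ≤ 1)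
    (hfix : ∀ z, f z = Phi μ κ f z) (t : ℕ) (x : S) : f x ≤ rhoSeq μ κ t x := by
  induction t generalizing x with
  | zero => exact hf1 x
  | succ t ih =>
      rw [hfix x]
      exact Phi_mono μ κ (fun z => (rhoSeq_mem μ κ t z).2) (fun z => ih z) x

end Aux

/-- Lemma 2.1, `l_max`, of the paper.
For an integrable hyperkernel `κ` with `S_κ(1)(x) < ∞` for every `x`, the iterates
`ρ_0 = 1`, `ρ_{t+1} = Φ_κ(ρ_t)` decrease pointwise; their pointwise limit `ρ_κ` is a
measurable `[0,1]`-valued fixed point of `Φ_κ`, and any measurable `[0,1]`-valued fixed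
point `f` of `Φ_κ` satisfies `f(x) ≤ ρ_κ(x) < 1` for every `x`. -/
theorem stmt2 {S : Type*} [MeasurableSpace S] (μ : Measure S) [IsProbabilityMeasure μ]
    (κ : (m : ℕ) → (Fin (m + 2) → S) → ℝ≥0∞)
    (hmeas : HyperkernelMeasurable κ) (hsymm : HyperkernelSymm κ)
    (hint : HyperkernelIntegrable μ κ)
    (hfin : ∀ x, Sop μ κ (fun _ => 1) x < ⊤) :
    (∀ x, Antitone fun t => rhoSeq μ κ t x) ∧
    (∀ x, 0 ≤ rhoFun μ κ x ∧ rhoFun μ κ x ≤ 1) ∧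
    Measurable (rhoFun μ κ) ∧
    (∀ x, Tendsto (fun t => rhoSeq μ κ t x) atTop (nhds (rhoFun μ κ x))) ∧
    (∀ x, rhoFun μ κ x = Phi μ κ (rhoFun μ κ) x) ∧
    (∀ f : S → ℝ, Measurable f → (∀ x, 0 ≤ f x ∧ f x ≤ 1) →
      (∀ x, f x = Phi μ κ f x) → ∀ x, f x ≤ rhoFun μ κ x ∧ rhoFun μ κ x < 1) := by
  refine ⟨fun x => rhoSeq_anti μ κ x, fun x => rhoFun_mem μ κ x,
    measurable_rhoFun μ κ hmeas, fun x => rhoSeq_tendsto μ κ x,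
    fun x => rhoFun_fixed μ κ hmeas hfin x, ?_⟩
  intro f hf hf01 hfix x
  constructor
  · exact le_ciInf fun t => fix_le_rhoSeq μ κ (fun z => (hf01 z).2) hfix t x
  · rw [rhoFun_fixed μ κ hmeas hfin x]
    exact Phi_lt_one μ κ (Sop_rho_ne_top μ κ hfin (fun z => (rhoFun_mem μ κ z).2) x)
end

section
/- Let κ be an integrable hyperkernel on a probability space (S, μ). If there exists a measurable f : S → [0,1] with 0 < μ{x : f(x) > 0} < 1 and {x : S_κ(f)(x) > 0} ⊆ {x : f(x) > 0}, then κ is reducible: there exists a measurable set A ⊆ S with 0 < μ(A) < 1 such that κ_e = 0 (μ×μ)-a.e. on A × (S∖A). -/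
/-!
Take `A = {f = 0}`. For `x ∈ A` the hypothesis forces `S_κ(f)(x) = 0`, so every summand of
`S_κ(f)(x)` vanishes. As `1 - ∏ (1 - f(yᵢ)) ≥ f(y₁)`, the `r`-th summand dominates
`∫ κ_r(x, y, z) f(y)`, hence `∫ κ_e(x, y) f(y) dμ(y) = 0`, i.e. `κ_e(x, ·) = 0` a.e. on
`{f > 0} = Aᶜ`. Fubini then gives `κ_e = 0` a.e. on `A × Aᶜ`.
-/

open MeasureTheory ENNReal Filter Topology

section Fubini

variable {S : Type*} [MeasurableSpace S]

@[fun_prop]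
theorem Measurable.finCons {α : Type*} [MeasurableSpace α] {n : ℕ} {f : α → S}
    {g : α → Fin n → S} (hf : Measurable f) (hg : Measurable g) :
    Measurable fun a => (Fin.cons (f a) (g a) : Fin (n + 1) → S) := by
  have h := (MeasurableEquiv.piFinSuccAbove (fun _ : Fin (n + 1) => S) 0).symm.measurable
  simp only [MeasurableEquiv.piFinSuccAbove_symm_apply, Fin.insertNthEquiv,
    Fin.insertNth_zero'] at h
  exact h.comp (hf.prodMk hg)

theorem lintegral_pi_fin_succ_eq_lintegral_cons (μ : Measure S) [SigmaFinite μ] {n : ℕ}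
    {g : (Fin (n + 1) → S) → ℝ≥0∞} (hg : Measurable g) :
    ∫⁻ y, g y ∂(Measure.pi fun _ => μ)
      = ∫⁻ a, ∫⁻ z, g (Fin.cons a z) ∂(Measure.pi fun _ => μ) ∂μ := by
  have e := (measurePreserving_piFinSuccAbove (fun _ : Fin (n + 1) => μ) 0).symm
  rw [← e.lintegral_comp hg]
  refine (lintegral_prod _ (hg.comp e.measurable).aemeasurable).trans ?_
  simp only [Function.comp_apply, MeasurableEquiv.piFinSuccAbove_symm_apply, Fin.insertNthEquiv,
    Equiv.coe_fn_mk, Fin.insertNth_zero']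

end Fubini

theorem le_one_sub_prod_one_sub {ι : Type*} [Fintype ι] {a : ι → ℝ}
    (h0 : ∀ i, 0 ≤ a i) (h1 : ∀ i, a i ≤ 1) (j : ι) :
    a j ≤ 1 - ∏ i, (1 - a i) := by
  classical
  have hprod : ∏ i, (1 - a i) ≤ 1 - a j := calc
    ∏ i, (1 - a i) = (1 - a j) * ∏ i ∈ Finset.univ.erase j, (1 - a i) :=
      (Finset.mul_prod_erase _ _ (Finset.mem_univ j)).symm
    _ ≤ (1 - a j) * 1 := by
      gcongr
      · linarith [h1 j]
      · exact Finset.prod_le_one (fun i _ => by linarith [h1 i]) (fun i _ => by linarith [h0 i])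
    _ = 1 - a j := mul_one _
  linarith

section EdgeKernel

variable {S : Type*} [MeasurableSpace S] (μ : Measure S)
  (κ : (m : ℕ) → (Fin (m + 2) → S) → ℝ≥0∞)

noncomputable def edgeKernelTerm (m : ℕ) (x y : S) : ℝ≥0∞ :=
  ∫⁻ z : Fin m → S, κ m (Fin.cons x (Fin.cons y z)) ∂(Measure.pi fun _ => μ)

theorem edgeKernel_eq_tsum (x y : S) :
    edgeKernel μ κ x y
      = ∑' m : ℕ, ((m : ℝ≥0∞) + 2) * ((m : ℝ≥0∞) + 1) * edgeKernelTerm μ κ m x y :=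
  rfl

variable [SigmaFinite μ]

theorem measurable_edgeKernelTerm (hmeas : HyperkernelMeasurable κ) (m : ℕ) :
    Measurable (Function.uncurry (edgeKernelTerm μ κ m)) := by
  have := hmeas m
  exact Measurable.lintegral_prod_right'
    (f := fun q : (S × S) × (Fin m → S) => κ m (Fin.cons q.1.1 (Fin.cons q.1.2 q.2)))
    (by fun_prop)

theorem measurable_edgeKernel (hmeas : HyperkernelMeasurable κ) :
    Measurable (Function.uncurry (edgeKernel μ κ)) :=
  Measurable.tsum fun m => (measurable_edgeKernelTerm μ κ hmeas m).const_mul _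

theorem Tlin_eq_tsum (hmeas : HyperkernelMeasurable κ) {f : S → ℝ} (hf : Measurable f) (x : S) :
    Tlin μ κ f x = ∑' m : ℕ, ((m : ℝ≥0∞) + 2) * ((m : ℝ≥0∞) + 1) *
      ∫⁻ y, edgeKernelTerm μ κ m x y * ENNReal.ofReal (f y) ∂μ := by
  simp only [Tlin, edgeKernel_eq_tsum, ← ENNReal.tsum_mul_right]
  rw [lintegral_tsum fun m => ?_]
  · congr 1 with m
    rw [← lintegral_const_mul' _ _ (by finiteness)]
    simp only [mul_assoc]
  · exact ((((measurable_edgeKernelTerm μ κ hmeas m).of_uncurry_left).const_mul _).mul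
      hf.ennreal_ofReal).aemeasurable

theorem lintegral_edgeKernelTerm_mul_le (hmeas : HyperkernelMeasurable κ) {f : S → ℝ}
    (hf : Measurable f) (hf01 : ∀ x, 0 ≤ f x ∧ f x ≤ 1) (m : ℕ) (x : S) :
    ∫⁻ y, edgeKernelTerm μ κ m x y * ENNReal.ofReal (f y) ∂μ
      ≤ ∫⁻ y : Fin (m + 1) → S, κ m (Fin.cons x y) * ENNReal.ofReal (1 - ∏ i, (1 - f (y i)))
          ∂(Measure.pi fun _ => μ) := by
  have := hmeas m
  calc ∫⁻ y, edgeKernelTerm μ κ m x y * ENNReal.ofReal (f y) ∂μ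
      = ∫⁻ y : Fin (m + 1) → S, κ m (Fin.cons x y) * ENNReal.ofReal (f (y 0))
          ∂(Measure.pi fun _ => μ) := by
        rw [lintegral_pi_fin_succ_eq_lintegral_cons μ (by fun_prop)]
        simp only [edgeKernelTerm, Fin.cons_zero]
        congr 1 with a
        rw [lintegral_mul_const' _ _ ofReal_ne_top]
    _ ≤ _ := lintegral_mono fun y => by
        gcongr
        exact le_one_sub_prod_one_sub (fun i => (hf01 _).1) (fun i => (hf01 _).2) 0

theorem Tlin_eq_zero_of_Sop_eq_zero (hmeas : HyperkernelMeasurable κ) {f : S → ℝ}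
    (hf : Measurable f) (hf01 : ∀ x, 0 ≤ f x ∧ f x ≤ 1) {x : S} (hx : Sop μ κ f x = 0) :
    Tlin μ κ f x = 0 := by
  have hterm := ENNReal.tsum_eq_zero.mp hx
  rw [Tlin_eq_tsum μ κ hmeas hf, ENNReal.tsum_eq_zero]
  intro m
  refine le_antisymm ?_ zero_le
  calc ((m : ℝ≥0∞) + 2) * ((m : ℝ≥0∞) + 1) *
        ∫⁻ y, edgeKernelTerm μ κ m x y * ENNReal.ofReal (f y) ∂μ
      ≤ ((m : ℝ≥0∞) + 2) * ((m : ℝ≥0∞) + 1) *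
        ∫⁻ y : Fin (m + 1) → S, κ m (Fin.cons x y) * ENNReal.ofReal (1 - ∏ i, (1 - f (y i)))
          ∂(Measure.pi fun _ => μ) := by
        gcongr
        exact lintegral_edgeKernelTerm_mul_le μ κ hmeas hf hf01 m x
    _ = ((m : ℝ≥0∞) + 1) * (((m : ℝ≥0∞) + 2) *
        ∫⁻ y : Fin (m + 1) → S, κ m (Fin.cons x y) * ENNReal.ofReal (1 - ∏ i, (1 - f (y i)))
          ∂(Measure.pi fun _ => μ)) := by ring
    _ = 0 := by rw [hterm m, mul_zero]

theorem ae_edgeKernel_eq_zero_of_Tlin_eq_zero (hmeas : HyperkernelMeasurable κ) {f : S → ℝ}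
    (hf : Measurable f) {A : Set S} (hA : MeasurableSet A) (hT : ∀ x ∈ A, Tlin μ κ f x = 0) :
    ∀ᵐ p ∂(μ.prod μ), p ∈ A ×ˢ {y | 0 < f y} → edgeKernel μ κ p.1 p.2 = 0 := by
  have hK := measurable_edgeKernel μ κ hmeas
  have hpos : MeasurableSet {y | 0 < f y} := measurableSet_lt measurable_const hf
  rw [Measure.ae_prod_iff_ae_ae ?meas]
  case meas => exact (hA.prod hpos).imp (hK (measurableSet_singleton 0))
  refine ae_of_all _ fun x => ?_
  by_cases hx : x ∈ A
  · have hzero := (lintegral_eq_zero_iff (hK.of_uncurry_left.mul hf.ennreal_ofReal)).mp (hT x hx)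
    filter_upwards [hzero] with y hy hxy
    have hfy : 0 < f y := hxy.2
    simpa [ENNReal.ofReal_eq_zero, not_le.mpr hfy] using hy
  · exact ae_of_all _ fun y hxy => absurd hxy.1 hx

end EdgeKernel

theorem stmt5_general {S : Type*} [MeasurableSpace S] (μ : Measure S) [IsProbabilityMeasure μ]
    (κ : (m : ℕ) → (Fin (m + 2) → S) → ℝ≥0∞)
    (hmeas : HyperkernelMeasurable κ)
    (f : S → ℝ) (hf : Measurable f) (hf01 : ∀ x, 0 ≤ f x ∧ f x ≤ 1)
    (hpos : 0 < μ {x | 0 < f x}) (hlt : μ {x | 0 < f x} < 1)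
    (hsub : {x | 0 < Sop μ κ f x} ⊆ {x | 0 < f x}) :
    ∃ A : Set S, MeasurableSet A ∧ 0 < μ A ∧ μ A < 1 ∧
      ∀ᵐ p ∂(μ.prod μ), p ∈ A ×ˢ Aᶜ → edgeKernel μ κ p.1 p.2 = 0 := by
  set B := {x | 0 < f x}
  have hB : MeasurableSet B := measurableSet_lt measurable_const hf
  have hT : ∀ x ∈ Bᶜ, Tlin μ κ f x = 0 := fun x hx =>
    Tlin_eq_zero_of_Sop_eq_zero μ κ hmeas hf hf01
      (nonpos_iff_eq_zero.mp (not_lt.mp fun h => hx (hsub h)))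
  refine ⟨Bᶜ, hB.compl, ?_, ?_, ?_⟩
  · rw [prob_compl_eq_one_sub hB]
    exact tsub_pos_iff_lt.mpr hlt
  · rw [prob_compl_eq_one_sub hB]
    exact ENNReal.sub_lt_self one_ne_top one_ne_zero hpos.ne'
  · simpa only [compl_compl] using ae_edgeKernel_eq_zero_of_Tlin_eq_zero μ κ hmeas hf hB.compl hT

/-- Lemma 2.3, `l_red2`, of the paper.
If there is a measurable `f : S → [0,1]` with `0 < μ{f > 0} < 1` and
`{S_κ(f) > 0} ⊆ {f > 0}`, then `κ` is reducible. -/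
theorem stmt5 {S : Type*} [MeasurableSpace S] (μ : Measure S) [IsProbabilityMeasure μ]
    (κ : (m : ℕ) → (Fin (m + 2) → S) → ℝ≥0∞)
    (hmeas : HyperkernelMeasurable κ) (hsymm : HyperkernelSymm κ)
    (hint : HyperkernelIntegrable μ κ)
    (f : S → ℝ) (hf : Measurable f) (hf01 : ∀ x, 0 ≤ f x ∧ f x ≤ 1)
    (hpos : 0 < μ {x | 0 < f x}) (hlt : μ {x | 0 < f x} < 1)
    (hsub : {x | 0 < Sop μ κ f x} ⊆ {x | 0 < f x}) :
    ∃ A : Set S, MeasurableSet A ∧ 0 < μ A ∧ μ A < 1 ∧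
      ∀ᵐ p ∂(μ.prod μ), p ∈ A ×ˢ Aᶜ → edgeKernel μ κ p.1 p.2 = 0 :=
  stmt5_general μ κ hmeas f hf hf01 hpos hlt hsub
end
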